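/- arXiv:2209.14884 — 3 statements merged into one kernel-verified Lean document; each statement's English description precedes it below -/
import Mathlib

section
/- (Contrastive induced kernel lower bound) Under the pairwise-augmentation setup, suppose indices i, j satisfy A_{ij} = 1, and points x, x' satisfy ‖Φ(x) - Φ(x_i)‖_H ≤ Δ/(5‖K_{s,s}^{-1}‖√N) and ‖Φ(x') - Φ(x_j)‖_H ≤ Δ/(5‖K_{s,s}^{-1}‖√N) for some Δ ∈ (0,1]. Then the induced kernel k*(x,x') = k_{x,s} K_{s,s}^{-1} (I + A) K_{s,s}^{-1} k_{s,x'} satisfies k*(x,x') ≥ 1 - Δ. -/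
/-!
Put `a = K⁻¹ k_{s,x}` and `b = K⁻¹ k_{s,x'}`. A Gram matrix is symmetric, so
`k*(x,x') = ⟪a, (I + A) b⟫` in `ℓ²(Fin N)`. Since `K⁻¹ k_{s,x_i} = e_i`, the difference `a - e_i` is
`K⁻¹` applied to `(⟪Φ(x_m), Φ(x) - Φ(x_i)⟫)_m`, a vector whose entries are at most
`‖Φ(x) - Φ(x_i)‖`; hence `‖a - e_i‖ ≤ ‖K⁻¹‖ √N ‖Φ(x) - Φ(x_i)‖ ≤ Δ/5`, and likewise
`‖b - e_j‖ ≤ Δ/5`. As `⟪e_i, (I + A) e_j⟫ ≥ 1` and `‖I + A‖ ≤ 2`, bilinearity bounds the error by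
`2 (δ (1 + δ) + δ) ≤ Δ` with `δ = Δ/5 ≤ 1/5`.
-/
open Matrix RealInnerProductSpace

theorem abs_inner_apply_sub_inner_apply_le {E : Type*} [NormedAddCommGroup E]
    [InnerProductSpace ℝ E] (L : E →L[ℝ] E) (a b e f : E) :
    |⟪a, L b⟫ - ⟪e, L f⟫| ≤ ‖L‖ * (‖a - e‖ * ‖b‖ + ‖e‖ * ‖b - f‖) := by
  have hsplit : ⟪a, L b⟫ - ⟪e, L f⟫ = ⟪a - e, L b⟫ + ⟪e, L (b - f)⟫ := by
    rw [inner_sub_left, map_sub, inner_sub_right]; ring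
  calc |⟪a, L b⟫ - ⟪e, L f⟫| ≤ |⟪a - e, L b⟫| + |⟪e, L (b - f)⟫| := hsplit ▸ abs_add_le _ _
    _ ≤ ‖a - e‖ * ‖L b‖ + ‖e‖ * ‖L (b - f)‖ :=
      add_le_add (abs_real_inner_le_norm _ _) (abs_real_inner_le_norm _ _)
    _ ≤ ‖a - e‖ * (‖L‖ * ‖b‖) + ‖e‖ * (‖L‖ * ‖b - f‖) := by
      gcongr <;> exact L.le_opNorm _
    _ = ‖L‖ * (‖a - e‖ * ‖b‖ + ‖e‖ * ‖b - f‖) := by ring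

theorem one_sub_le_inner_apply_of_norm_sub_le {E : Type*} [NormedAddCommGroup E]
    [InnerProductSpace ℝ E] {L : E →L[ℝ] E} (hL : ‖L‖ ≤ 2) {a b e f : E} (he : ‖e‖ = 1)
    (hf : ‖f‖ = 1) (hef : 1 ≤ ⟪e, L f⟫) {Δ : ℝ} (hΔ1 : Δ ≤ 1) (ha : ‖a - e‖ ≤ Δ / 5)
    (hb : ‖b - f‖ ≤ Δ / 5) : 1 - Δ ≤ ⟪a, L b⟫ := by
  have hΔ : 0 ≤ Δ / 5 := (norm_nonneg _).trans ha
  have hbnorm : ‖b‖ ≤ 1 + Δ / 5 := (norm_le_norm_add_norm_sub' b f).trans (by rw [hf]; gcongr)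
  have hperturb : |⟪a, L b⟫ - ⟪e, L f⟫| ≤ Δ :=
    calc _ ≤ ‖L‖ * (‖a - e‖ * ‖b‖ + ‖e‖ * ‖b - f‖) := abs_inner_apply_sub_inner_apply_le L a b e f
      _ ≤ 2 * (Δ / 5 * (1 + Δ / 5) + 1 * (Δ / 5)) := by rw [he]; gcongr
      _ ≤ Δ := by nlinarith
  linarith [(abs_le.mp hperturb).1]

theorem EuclideanSpace.norm_le_sqrt_card_mul {ι : Type*} [Fintype ι] (x : EuclideanSpace ℝ ι)
    {c : ℝ} (hc : 0 ≤ c) (hx : ∀ m, |x m| ≤ c) :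
    ‖x‖ ≤ √(Fintype.card ι) * c := by
  rw [EuclideanSpace.norm_eq, ← Real.sqrt_sq hc, ← Real.sqrt_mul (Nat.cast_nonneg _)]
  refine Real.sqrt_le_sqrt ?_
  calc ∑ m, ‖x m‖ ^ 2 ≤ ∑ _m : ι, c ^ 2 :=
        Finset.sum_le_sum fun m _ => pow_le_pow_left₀ (norm_nonneg _) (hx m) 2
    _ = Fintype.card ι * c ^ 2 := by simp

theorem transpose_gram {ι H : Type*} [NormedAddCommGroup H] [InnerProductSpace ℝ H]
    (v : ι → H) : (gram ℝ v)ᵀ = gram ℝ v :=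
  Matrix.ext fun _ _ => real_inner_comm _ _

theorem dotProduct_mul_mul_mulVec_of_transpose_eq {ι : Type*} [Fintype ι]
    {S : Matrix ι ι ℝ} (hS : Sᵀ = S) (M : Matrix ι ι ℝ) (u w : ι → ℝ) :
    u ⬝ᵥ (S * M * S) *ᵥ w = (S *ᵥ u) ⬝ᵥ M *ᵥ (S *ᵥ w) := by
  rw [← mulVec_mulVec, ← mulVec_mulVec, dotProduct_mulVec, ← mulVec_transpose, hS]

section Gram

variable {ι H : Type*} [Fintype ι] [DecidableEq ι] [NormedAddCommGroup H] [InnerProductSpace ℝ H]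

theorem gram_mulVec_single_one (v : ι → H) (i : ι) :
    gram ℝ v *ᵥ Pi.single i 1 = fun m => ⟪v m, v i⟫ :=
  mulVec_single_one _ i

theorem norm_inv_gram_mulVec_inner_sub_single_le {v : ι → H} (hv : ∀ m, ‖v m‖ ≤ 1)
    (hG : IsUnit (gram ℝ v).det) (y : H) (i : ι) :
    ‖WithLp.toLp 2 ((gram ℝ v)⁻¹ *ᵥ fun m => ⟪v m, y⟫) - WithLp.toLp 2 (Pi.single i 1)‖ ≤
      ‖toEuclideanCLM (𝕜 := ℝ) (n := ι) (gram ℝ v)⁻¹‖ * (√(Fintype.card ι) * ‖y - v i‖) := by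
  set w : ι → ℝ := fun m => ⟪v m, y - v i⟫
  have hdecomp : (fun m => ⟪v m, y⟫) = gram ℝ v *ᵥ Pi.single i 1 + w := by
    rw [gram_mulVec_single_one]; ext m; simp [w, inner_sub_right]
  have hcoeff : (gram ℝ v)⁻¹ *ᵥ (fun m => ⟪v m, y⟫) = Pi.single i 1 + (gram ℝ v)⁻¹ *ᵥ w := by
    rw [hdecomp, mulVec_add, mulVec_mulVec, nonsing_inv_mul _ hG, one_mulVec]
  have hw : ‖WithLp.toLp 2 w‖ ≤ √(Fintype.card ι) * ‖y - v i‖ :=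
    EuclideanSpace.norm_le_sqrt_card_mul _ (norm_nonneg _) fun m =>
      (abs_real_inner_le_norm _ _).trans (mul_le_of_le_one_left (norm_nonneg _) (hv m))
  rw [hcoeff, WithLp.toLp_add, add_sub_cancel_left, ← toEuclideanCLM_toLp]
  exact (ContinuousLinearMap.le_opNorm _ _).trans (by gcongr)

end Gram

open scoped Matrix.Norms.L2Operator in
theorem l2_opNorm_one_add_permMatrix_le {n : Type*} [Fintype n] [DecidableEq n]
    (σ : Equiv.Perm n) : ‖(1 + σ.permMatrix ℝ : Matrix n n ℝ)‖ ≤ 2 :=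
  calc ‖(1 + σ.permMatrix ℝ : Matrix n n ℝ)‖ ≤ ‖(1 : Matrix n n ℝ)‖ + ‖σ.permMatrix ℝ‖ :=
        norm_add_le _ _
    _ ≤ 1 + 1 := by
      gcongr
      · rw [← l2_opNorm_toEuclideanCLM, map_one]; exact ContinuousLinearMap.norm_id_le
      · exact permMatrix_l2_opNorm_le σ
    _ = 2 := one_add_one_eq_two

theorem stmt_7_general {X : Type*} {H : Type*} [NormedAddCommGroup H] [InnerProductSpace ℝ H]
    {N : ℕ} (Φ : X → H) (pts : Fin N → X)
    (hnorm : ∀ m, ‖Φ (pts m)‖ = 1)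
    (Ks : Matrix (Fin N) (Fin N) ℝ)
    (hKs : Ks = Matrix.of (fun i j : Fin N => ⟪Φ (pts i), Φ (pts j)⟫))
    (hinv : IsUnit Ks.det)
    (σ : Equiv.Perm (Fin N))
    (A : Matrix (Fin N) (Fin N) ℝ)
    (hA : A = Matrix.of (fun i j : Fin N => if σ i = j then (1 : ℝ) else 0))
    (kvec : X → (Fin N → ℝ))
    (hkvec : ∀ x, kvec x = fun m => ⟪Φ (pts m), Φ x⟫)
    (i j : Fin N) (hij : A i j = 1)
    (x x' : X) (Δ : ℝ) (hΔ : 0 < Δ) (hΔ1 : Δ ≤ 1)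
    (hx : ‖Φ x - Φ (pts i)‖ ≤
      Δ / (5 * ‖Matrix.toEuclideanCLM (𝕜 := ℝ) (n := Fin N) Ks⁻¹‖ * Real.sqrt N))
    (hx' : ‖Φ x' - Φ (pts j)‖ ≤
      Δ / (5 * ‖Matrix.toEuclideanCLM (𝕜 := ℝ) (n := Fin N) Ks⁻¹‖ * Real.sqrt N)) :
    1 - Δ ≤ kvec x ⬝ᵥ (Ks⁻¹ * (1 + A) * Ks⁻¹).mulVec (kvec x') := by
  have hA' : A = σ.permMatrix ℝ := by
    rw [hA]; ext; simp [PEquiv.toMatrix_apply]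
  change Ks = gram ℝ (Φ ∘ pts) at hKs
  subst hKs
  set C := ‖toEuclideanCLM (𝕜 := ℝ) (n := Fin N) (gram ℝ (Φ ∘ pts))⁻¹‖
  have hcoeff : ∀ y p, ‖Φ y - Φ (pts p)‖ ≤ Δ / (5 * C * √N) →
      ‖WithLp.toLp 2 ((gram ℝ (Φ ∘ pts))⁻¹ *ᵥ kvec y) - WithLp.toLp 2 (Pi.single p 1)‖ ≤ Δ / 5 := by
    intro y p hy
    rw [hkvec]
    refine (norm_inv_gram_mulVec_inner_sub_single_le (v := Φ ∘ pts) (fun m => (hnorm m).le) hinv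
      (Φ y) p).trans ?_
    calc _ = ‖Φ y - Φ (pts p)‖ * (C * √N) := by rw [Fintype.card_fin, Function.comp_apply]; ring
      _ ≤ Δ / 5 := mul_le_of_le_div₀ (by positivity) (by positivity) (hy.trans_eq (by ring))
  have hMij : 1 ≤ ⟪WithLp.toLp 2 (Pi.single i 1), toEuclideanCLM (𝕜 := ℝ) (1 + A)
      (WithLp.toLp 2 (Pi.single j 1))⟫ := by
    rw [inner_toEuclideanCLM]
    simp only [mulVec_single_one, single_dotProduct, one_mul, col_apply,
      Matrix.add_apply, hij, one_apply]
    split_ifs <;> norm_num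
  rw [dotProduct_mul_mul_mulVec_of_transpose_eq (by rw [transpose_nonsing_inv, transpose_gram]),
    ← inner_toEuclideanCLM]
  exact one_sub_le_inner_apply_of_norm_sub_le (hA' ▸ l2_opNorm_one_add_permMatrix_le σ)
    (by simp) (by simp) hMij hΔ1 (hcoeff x i hx) (hcoeff x' j hx')

/-- Contrastive induced kernel lower bound: if `x` and `x'` are close in kernel
space to two SSL datapoints related by an augmentation, then the induced kernel
`k*(x,x') = k_{x,s} K⁻¹ (I + A) K⁻¹ k_{s,x'}` is at least `1 - Δ`. -/
theorem stmt_7 {X : Type*} {H : Type*} [NormedAddCommGroup H] [InnerProductSpace ℝ H]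
    {N : ℕ} (Φ : X → H) (pts : Fin N → X)
    (hnorm : ∀ m, ‖Φ (pts m)‖ = 1)
    (Ks : Matrix (Fin N) (Fin N) ℝ)
    (hKs : Ks = Matrix.of (fun i j : Fin N => ⟪Φ (pts i), Φ (pts j)⟫))
    (hinv : IsUnit Ks.det)
    (σ : Equiv.Perm (Fin N)) (hfix : ∀ m, σ m ≠ m) (hinvol : ∀ m, σ (σ m) = m)
    (A : Matrix (Fin N) (Fin N) ℝ)
    (hA : A = Matrix.of (fun i j : Fin N => if σ i = j then (1 : ℝ) else 0))
    (kvec : X → (Fin N → ℝ))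
    (hkvec : ∀ x, kvec x = fun m => ⟪Φ (pts m), Φ x⟫)
    (i j : Fin N) (hij : A i j = 1)
    (x x' : X) (Δ : ℝ) (hΔ : 0 < Δ) (hΔ1 : Δ ≤ 1)
    (hx : ‖Φ x - Φ (pts i)‖ ≤
      Δ / (5 * ‖Matrix.toEuclideanCLM (𝕜 := ℝ) (n := Fin N) Ks⁻¹‖ * Real.sqrt N))
    (hx' : ‖Φ x' - Φ (pts j)‖ ≤
      Δ / (5 * ‖Matrix.toEuclideanCLM (𝕜 := ℝ) (n := Fin N) Ks⁻¹‖ * Real.sqrt N)) :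
    1 - Δ ≤ kvec x ⬝ᵥ (Ks⁻¹ * (1 + A) * Ks⁻¹).mulVec (kvec x') :=
  stmt_7_general Φ pts hnorm Ks hKs hinv σ A hA kvec hkvec i j hij x x' Δ hΔ hΔ1 hx hx'
end

section
/- (KKT verification, contrastive case) Let X ∈ ℝ^{N×D}, let X⁺ be its Moore–Penrose pseudoinverse, and let P ∈ ℝ^{N×N} be symmetric PSD with column space contained in the row space of XXᵀ (i.e., XX⁺ P = P). Define B* = X⁺ P (X⁺)ᵀ and Y* = (X⁺)ᵀ X⁺. Then: (a) X B* Xᵀ = P; (b) B* ⪰ 0; (c) (I_D - Xᵀ Y* X) B* = 0. -/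
/-! `X X⁺` and `X⁺ X` are orthogonal projections: the first fixes `P` (from both sides, by
symmetry), which gives `X B* Xᵀ = P`; the second fixes the columns of `X⁺`, and
`Xᵀ Y* X = (X⁺ X)ᵀ (X⁺ X)`, which gives complementary slackness. -/

open Matrix

namespace Matrix

variable {m n k R : Type*} [Fintype m] [Fintype n] [CommRing R]

theorem mul_mul_transpose_eq_of_mul_eq {Q P : Matrix n n R} (hQ : Qᵀ = Q) (hP : Pᵀ = P)
    (hQP : Q * P = P) : Q * P * Qᵀ = P := by
  have hPQ : P * Q = P := by
    simpa only [transpose_mul, hQ, hP] using congrArg transpose hQP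
  rw [hQP, hQ, hPQ]

theorem one_sub_transpose_mul_mul_mul_eq_zero [DecidableEq n] {A : Matrix m n R}
    {B : Matrix n m R} (hBAB : B * A * B = B) (hBA : (B * A)ᵀ = B * A) (M : Matrix m k R) :
    (1 - Aᵀ * (Bᵀ * B) * A) * (B * M) = 0 := by
  have hAB : Aᵀ * Bᵀ = B * A := by rw [← transpose_mul, hBA]
  have hproj : Aᵀ * (Bᵀ * B) * A * B = B := by
    simp only [← Matrix.mul_assoc]
    rw [hAB, hBAB, hBAB]
  rw [Matrix.sub_mul, Matrix.one_mul, ← Matrix.mul_assoc, hproj, sub_self]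

end Matrix

theorem stmt_10_general {N D : ℕ}
    (X : Matrix (Fin N) (Fin D) ℝ) (Xp : Matrix (Fin D) (Fin N) ℝ)
    (h2 : Xp * X * Xp = Xp)
    (h3 : (X * Xp)ᵀ = X * Xp) (h4 : (Xp * X)ᵀ = Xp * X)
    (P : Matrix (Fin N) (Fin N) ℝ) (hP : P.PosSemidef)
    (hrange : X * Xp * P = P)
    (Bstar : Matrix (Fin D) (Fin D) ℝ) (hB : Bstar = Xp * P * Xpᵀ)
    (Ystar : Matrix (Fin N) (Fin N) ℝ) (hY : Ystar = Xpᵀ * Xp) :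
    X * Bstar * Xᵀ = P ∧
    Bstar.PosSemidef ∧
    (1 - Xᵀ * Ystar * X) * Bstar = 0 := by
  subst hB hY
  refine ⟨?_, ?_, ?_⟩
  · calc X * (Xp * P * Xpᵀ) * Xᵀ = X * Xp * P * (X * Xp)ᵀ := by
          simp only [transpose_mul, Matrix.mul_assoc]
      _ = P := mul_mul_transpose_eq_of_mul_eq h3 hP.isHermitian.eq hrange
  · simpa using hP.mul_mul_conjTranspose_same Xp
  · rw [Matrix.mul_assoc Xp]
    exact one_sub_transpose_mul_mul_mul_eq_zero h2 h4 _

/-- KKT verification (contrastive case): with `B* = X⁺ P (X⁺)ᵀ` and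
`Y* = (X⁺)ᵀ X⁺`, primal feasibility `X B* Xᵀ = P`, `B* ⪰ 0`, and complementary
slackness `(I - Xᵀ Y* X) B* = 0` hold. -/
theorem stmt_10 {N D : ℕ}
    (X : Matrix (Fin N) (Fin D) ℝ) (Xp : Matrix (Fin D) (Fin N) ℝ)
    (h1 : X * Xp * X = X) (h2 : Xp * X * Xp = Xp)
    (h3 : (X * Xp)ᵀ = X * Xp) (h4 : (Xp * X)ᵀ = Xp * X)
    (P : Matrix (Fin N) (Fin N) ℝ) (hP : P.PosSemidef)
    (hrange : X * Xp * P = P)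
    (Bstar : Matrix (Fin D) (Fin D) ℝ) (hB : Bstar = Xp * P * Xpᵀ)
    (Ystar : Matrix (Fin N) (Fin N) ℝ) (hY : Ystar = Xpᵀ * Xp) :
    X * Bstar * Xᵀ = P ∧
    Bstar.PosSemidef ∧
    (1 - Xᵀ * Ystar * X) * Bstar = 0 :=
  stmt_10_general X Xp h2 h3 h4 P hP hrange Bstar hB Ystar hY
end

section
/- For a symmetric positive semidefinite matrix S ∈ ℝ^{N×N} and a symmetric matrix T ∈ ℝ^{N×N} with spectral decomposition T = Σ_i λ_i v_i v_iᵀ, the Frobenius distance ‖S - T‖_F² is minimized over all PSD matrices S of rank at most K by S = Σ over the K indices with largest positive λ_i of λ_i v_i v_iᵀ (where negative λ_i are replaced by 0), i.e., projecting T onto its top-K positive eigenspace. -/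
/-!
Conjugating by the orthogonal matrix with rows `v i` reduces everything to `T = diagonal lam`.
A PSD matrix `M` of rank `≤ K` is `U * diagonal μ * Uᵀ` with `U` orthogonal, `μ ≥ 0` and at
least `N - K` of the `μ j` equal to zero, and then
`‖M - diagonal lam‖² = ∑ i j, (U i j)² (μ j - lam i)²`, where `(U i j)²` is doubly stochastic.
As `μ j ≥ 0`, the term `(μ j - lam i)²` is at least `(min (lam i) 0)²`, plus `(max (lam i) 0)²`
when `μ j = 0`. The weights `p i = ∑_{μ j = 0} (U i j)²` lie in `[0, 1]` and have total mass at
least `N - K`, so by the bathtub principle `∑ i, (max (lam i) 0)² p i` is at least the sum of the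
`N - K` smallest values `(max (lam i) 0)²`, i.e. those with `i ≥ K`. The resulting lower bound
is exactly the distance from `T` to the truncated matrix.
-/

open Matrix Finset

section Frobenius

variable {R : Type*} [CommRing R]

theorem Matrix.trace_transpose_mul_self_eq_sum_sq {m n : Type*} [Fintype m] [Fintype n]
    (A : Matrix m n R) : (Aᵀ * A).trace = ∑ i, ∑ j, A i j ^ 2 := by
  simp only [trace, diag_apply, mul_apply, transpose_apply, sq]
  exact Finset.sum_comm

theorem Matrix.trace_transpose_mul_self_diagonal {n : Type*} [Fintype n] [DecidableEq n]
    (d : n → R) : ((diagonal d)ᵀ * diagonal d).trace = ∑ i, d i ^ 2 := by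
  simp [diagonal_mul_diagonal, trace_diagonal, sq]

theorem Matrix.trace_transpose_mul_self_mul_orthogonal {m n : Type*} [Fintype m] [Fintype n]
    [DecidableEq n] (A : Matrix m n R) {U : Matrix n n R} (hU : U * Uᵀ = 1) :
    ((A * U)ᵀ * (A * U)).trace = (Aᵀ * A).trace := by
  rw [transpose_mul, Matrix.mul_assoc, trace_mul_comm, ← Matrix.mul_assoc,
    Matrix.mul_assoc (Aᵀ * A) U, hU, Matrix.mul_one]

theorem Matrix.transpose_mul_self_orthogonal_mul {m n : Type*} [Fintype m] [DecidableEq m]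
    (A : Matrix m n R) {U : Matrix m m R} (hU : U * Uᵀ = 1) :
    (Uᵀ * A)ᵀ * (Uᵀ * A) = Aᵀ * A := by
  rw [transpose_mul, transpose_transpose, Matrix.mul_assoc, ← Matrix.mul_assoc U, hU,
    Matrix.one_mul]

theorem Matrix.trace_transpose_mul_self_conj_orthogonal {n : Type*} [Fintype n] [DecidableEq n]
    (A : Matrix n n R) {U : Matrix n n R} (hU : U * Uᵀ = 1) :
    ((Uᵀ * A * U)ᵀ * (Uᵀ * A * U)).trace = (Aᵀ * A).trace := by
  rw [trace_transpose_mul_self_mul_orthogonal _ hU, transpose_mul_self_orthogonal_mul _ hU]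

theorem Matrix.trace_transpose_mul_self_conj_sub_conj {n : Type*} [Fintype n] [DecidableEq n]
    (A B : Matrix n n R) {U : Matrix n n R} (hU : U * Uᵀ = 1) :
    ((Uᵀ * A * U - Uᵀ * B * U)ᵀ * (Uᵀ * A * U - Uᵀ * B * U)).trace
      = ((A - B)ᵀ * (A - B)).trace := by
  rw [← Matrix.sub_mul, ← Matrix.mul_sub, trace_transpose_mul_self_conj_orthogonal _ hU]

theorem Matrix.trace_transpose_mul_self_conj_diagonal_sub_diagonal {n : Type*} [Fintype n]
    [DecidableEq n] {U : Matrix n n R} (hU : U * Uᵀ = 1) (μ lam : n → R) :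
    ((U * diagonal μ * Uᵀ - diagonal lam)ᵀ * (U * diagonal μ * Uᵀ - diagonal lam)).trace
      = ∑ i, ∑ j, U i j ^ 2 * (μ j - lam i) ^ 2 := by
  have hXU : (U * diagonal μ * Uᵀ - diagonal lam) * U = of fun i j => U i j * (μ j - lam i) := by
    ext i j
    simp only [Matrix.sub_mul, Matrix.mul_assoc, mul_eq_one_comm.mp hU, Matrix.mul_one]
    simp [mul_diagonal, diagonal_mul]
    ring
  rw [← trace_transpose_mul_self_mul_orthogonal _ hU, hXU, trace_transpose_mul_self_eq_sum_sq]
  simp only [of_apply, mul_pow]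

end Frobenius

theorem Matrix.rank_mul_mul_le {l m n o R : Type*} [Fintype m] [Fintype n] [Fintype o]
    [CommRing R] [StrongRankCondition R] (A : Matrix l m R) (B : Matrix m n R)
    (C : Matrix n o R) : (A * B * C).rank ≤ B.rank :=
  (rank_mul_le_left _ _).trans (rank_mul_le_right _ _)

theorem Matrix.sum_smul_vecMulVec_self_eq {n R : Type*} [Fintype n] [DecidableEq n] [CommRing R]
    (v : n → n → R) (w : n → R) :
    ∑ i, w i • vecMulVec (v i) (v i) = (of v)ᵀ * diagonal w * of v := by
  ext a b
  simp only [sum_apply, smul_apply, vecMulVec_apply, mul_apply, transpose_apply, of_apply,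
    diagonal_apply, mul_ite, mul_zero, sum_ite_eq', mem_univ, if_true, smul_eq_mul]
  exact sum_congr rfl fun i _ => by ring

theorem Matrix.of_sq_mem_doublyStochastic {n : Type*} [Fintype n] [DecidableEq n]
    {U : Matrix n n ℝ} (hU : U * Uᵀ = 1) :
    of (fun i j => U i j ^ 2) ∈ doublyStochastic ℝ n := by
  have hU' : Uᵀ * U = 1 := mul_eq_one_comm.mp hU
  refine mem_doublyStochastic_iff_sum.mpr ⟨fun i j => sq_nonneg _, fun i => ?_, fun j => ?_⟩
  · simpa [mul_apply, sq] using congr_fun₂ hU i i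
  · simpa [mul_apply, sq] using congr_fun₂ hU' j j

theorem min_sq_add_max_sq (x : ℝ) : min x 0 ^ 2 + max x 0 ^ 2 = x ^ 2 := by
  rcases le_total x 0 with hx | hx <;> simp [hx]

theorem min_sq_add_ite_le_sq_sub {μ : ℝ} (hμ : 0 ≤ μ) (x : ℝ) :
    min x 0 ^ 2 + (if μ = 0 then max x 0 ^ 2 else 0) ≤ (μ - x) ^ 2 := by
  split_ifs with h
  · simp [h, min_sq_add_max_sq]
  · rcases le_total x 0 with hx | hx
    · simp only [min_eq_left hx, add_zero]; nlinarith
    · simp only [min_eq_right hx, add_zero]; nlinarith [sq_nonneg (μ - x)]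

theorem Finset.sum_le_sum_mul_of_bathtub {ι : Type*} [Fintype ι] (s : Finset ι)
    {c p : ι → ℝ} {t : ℝ} (ht : 0 ≤ t) (hc_mem : ∀ i ∈ s, c i ≤ t) (hc_not_mem : ∀ i ∉ s, t ≤ c i)
    (hp_nonneg : ∀ i, 0 ≤ p i) (hp_le_one : ∀ i, p i ≤ 1) (hs : (#s : ℝ) ≤ ∑ i, p i) :
    ∑ i ∈ s, c i ≤ ∑ i, c i * p i := by
  classical
  have key : ∀ i, t * (p i - if i ∈ s then 1 else 0) ≤ c i * p i - if i ∈ s then c i else 0 := by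
    intro i
    split_ifs with hi
    · nlinarith [hc_mem i hi, hp_le_one i]
    · nlinarith [hc_not_mem i hi, hp_nonneg i]
  have hsum := Finset.sum_le_sum fun i (_ : i ∈ univ) => key i
  simp only [← Finset.mul_sum, Finset.sum_sub_distrib, Finset.sum_ite_mem, univ_inter,
    sum_const, nsmul_eq_mul, mul_one] at hsum
  nlinarith

def topPosPart {N : ℕ} (K : ℕ) (lam : Fin N → ℝ) (i : Fin N) : ℝ :=
  if (i : ℕ) < K then max (lam i) 0 else 0

theorem topPosPart_nonneg {N : ℕ} (K : ℕ) (lam : Fin N → ℝ) (i : Fin N) :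
    0 ≤ topPosPart K lam i := by
  unfold topPosPart
  split_ifs
  exacts [le_max_right _ _, le_rfl]

theorem rank_diagonal_topPosPart_le {N : ℕ} (K : ℕ) (lam : Fin N → ℝ) :
    (diagonal (topPosPart K lam)).rank ≤ K := by
  classical
  rw [rank_diagonal, Fintype.card_subtype]
  calc #{i | topPosPart K lam i ≠ 0} ≤ #{i : Fin N | (i : ℕ) < K} := by
        refine card_le_card fun i hi => ?_
        simp only [mem_filter, mem_univ, true_and] at hi ⊢
        by_contra hiK
        exact hi (if_neg hiK)
    _ ≤ K := by
        rw [Fin.card_filter_val_lt]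
        exact min_le_right _ _

theorem sum_sq_topPosPart_sub {N : ℕ} (K : ℕ) (lam : Fin N → ℝ) :
    ∑ i, (topPosPart K lam i - lam i) ^ 2
      = ∑ i, min (lam i) 0 ^ 2
        + ∑ i ∈ univ.filter fun i : Fin N => K ≤ (i : ℕ), max (lam i) 0 ^ 2 := by
  rw [sum_filter, ← sum_add_distrib]
  refine sum_congr rfl fun i _ => ?_
  unfold topPosPart
  by_cases hi : (i : ℕ) < K
  · rw [if_pos hi, if_neg (not_le.mpr hi)]
    rcases le_total (lam i) 0 with h | h <;> simp [h]
  · rw [if_neg hi, if_pos (not_lt.mp hi), min_sq_add_max_sq]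
    ring

theorem sum_sq_topPosPart_sub_le_of_mem_doublyStochastic {N K : ℕ} {lam : Fin N → ℝ}
    (hlam : Antitone lam) {μ : Fin N → ℝ} (hμ : ∀ j, 0 ≤ μ j) (hμK : #{j | μ j ≠ 0} ≤ K)
    {W : Matrix (Fin N) (Fin N) ℝ} (hW : W ∈ doublyStochastic ℝ (Fin N)) :
    ∑ i, (topPosPart K lam i - lam i) ^ 2 ≤ ∑ i, ∑ j, W i j * (μ j - lam i) ^ 2 := by
  set Z : Finset (Fin N) := {j | μ j = 0}
  set p : Fin N → ℝ := fun i => ∑ j ∈ Z, W i j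
  have hrow (i : Fin N) :
      min (lam i) 0 ^ 2 + max (lam i) 0 ^ 2 * p i ≤ ∑ j, W i j * (μ j - lam i) ^ 2 := calc
    _ = ∑ j, W i j * (min (lam i) 0 ^ 2 + if μ j = 0 then max (lam i) 0 ^ 2 else 0) := by
      simp only [mul_add, sum_add_distrib, ← sum_mul, sum_row_of_mem_doublyStochastic hW,
        mul_ite, mul_zero, mul_one, ← sum_filter, p, Z, mul_comm]
    _ ≤ _ := sum_le_sum fun j _ => mul_le_mul_of_nonneg_left (min_sq_add_ite_le_sq_sub (hμ j) _)
      (nonneg_of_mem_doublyStochastic hW)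
  have hc : Antitone fun i => max (lam i) 0 ^ 2 := fun i j hij =>
    pow_le_pow_left₀ (le_max_right _ _) (max_le_max_right 0 (hlam hij)) 2
  have hp_le_one (i : Fin N) : p i ≤ 1 := by
    rw [← sum_row_of_mem_doublyStochastic hW i]
    exact sum_le_sum_of_subset_of_nonneg (subset_univ Z) fun j _ _ =>
      nonneg_of_mem_doublyStochastic hW
  have hsum_p : ∑ i, p i = #Z := by
    refine sum_comm.trans ?_
    simp [sum_col_of_mem_doublyStochastic hW]
  have hcard : #{i : Fin N | K ≤ (i : ℕ)} ≤ #Z := by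
    simp only [Z]
    have h₁ := card_filter_add_card_filter_not (s := univ) (fun i : Fin N => (i : ℕ) < K)
    have h₂ := card_filter_add_card_filter_not (s := univ) (fun j : Fin N => μ j = 0)
    simp only [Fin.card_filter_val_lt, not_lt, card_univ, Fintype.card_fin, ← ne_eq] at h₁ h₂
    omega
  have htail : ∑ i ∈ univ.filter fun i : Fin N => K ≤ (i : ℕ), max (lam i) 0 ^ 2
      ≤ ∑ i, max (lam i) 0 ^ 2 * p i := by
    refine sum_le_sum_mul_of_bathtub _
      (t := if h : K < N then max (lam ⟨K, h⟩) 0 ^ 2 else 0) ?_ ?_ ?_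
      (fun i => sum_nonneg fun j _ => nonneg_of_mem_doublyStochastic hW) hp_le_one
      (by rw [hsum_p]; exact_mod_cast hcard)
    · split_ifs <;> positivity
    · intro i hi
      have hKi : K ≤ (i : ℕ) := (mem_filter.mp hi).2
      rw [dif_pos (hKi.trans_lt i.2)]
      exact hc (Fin.le_def.mpr hKi)
    · intro i hi
      have hiK : (i : ℕ) < K := by simpa using hi
      split_ifs with h
      · exact hc (Fin.le_def.mpr hiK.le)
      · positivity
  calc ∑ i, (topPosPart K lam i - lam i) ^ 2
      = ∑ i, min (lam i) 0 ^ 2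
        + ∑ i ∈ univ.filter fun i : Fin N => K ≤ (i : ℕ), max (lam i) 0 ^ 2 :=
        sum_sq_topPosPart_sub K lam
    _ ≤ ∑ i, min (lam i) 0 ^ 2 + ∑ i, max (lam i) 0 ^ 2 * p i := by gcongr
    _ ≤ _ := by
      rw [← sum_add_distrib]
      exact sum_le_sum fun i _ => hrow i

theorem Matrix.PosSemidef.sum_sq_topPosPart_sub_le {N K : ℕ} {M : Matrix (Fin N) (Fin N) ℝ}
    (hM : M.PosSemidef) (hrank : M.rank ≤ K) {lam : Fin N → ℝ} (hlam : Antitone lam) :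
    ∑ i, (topPosPart K lam i - lam i) ^ 2
      ≤ ((M - diagonal lam)ᵀ * (M - diagonal lam)).trace := by
  classical
  set U : Matrix (Fin N) (Fin N) ℝ := ↑hM.1.eigenvectorUnitary
  have hU : U * Uᵀ = 1 := by
    simpa [U, star_eq_conjTranspose] using Unitary.coe_mul_star_self hM.1.eigenvectorUnitary
  have hspec : M = U * diagonal hM.1.eigenvalues * Uᵀ := by
    simpa [U, star_eq_conjTranspose] using hM.1.spectral_theorem
  have hμK : #{j | hM.1.eigenvalues j ≠ 0} ≤ K := by
    rwa [hM.1.rank_eq_card_non_zero_eigs, Fintype.card_subtype] at hrank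
  rw [hspec, trace_transpose_mul_self_conj_diagonal_sub_diagonal hU]
  exact sum_sq_topPosPart_sub_le_of_mem_doublyStochastic hlam hM.eigenvalues_nonneg hμK
    (of_sq_mem_doublyStochastic hU)

/-- PSD-constrained Eckart–Young: among symmetric PSD matrices of rank ≤ K, the
Frobenius distance to a symmetric matrix `T = Σ λ_i v_i v_iᵀ` (eigenvalues in
descending order) is minimized by `Σ_{i<K} max(λ_i,0) v_i v_iᵀ`. -/
theorem stmt_14 {N K : ℕ}
    (lam : Fin N → ℝ) (hlam : ∀ i j : Fin N, i ≤ j → lam j ≤ lam i)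
    (v : Fin N → (Fin N → ℝ))
    (hv : ∀ i j, v i ⬝ᵥ v j = if i = j then (1 : ℝ) else 0)
    (T : Matrix (Fin N) (Fin N) ℝ)
    (hT : T = ∑ i, lam i • Matrix.vecMulVec (v i) (v i))
    (Sopt : Matrix (Fin N) (Fin N) ℝ)
    (hSopt : Sopt = ∑ i ∈ Finset.univ.filter (fun i : Fin N => (i : ℕ) < K),
      max (lam i) 0 • Matrix.vecMulVec (v i) (v i)) :
    Sopt.PosSemidef ∧ Sopt.rank ≤ K ∧
    ∀ S : Matrix (Fin N) (Fin N) ℝ, S.PosSemidef → S.rank ≤ K →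
      ((Sopt - T)ᵀ * (Sopt - T)).trace ≤ ((S - T)ᵀ * (S - T)).trace := by
  set P : Matrix (Fin N) (Fin N) ℝ := of v
  have hP : P * Pᵀ = 1 := by
    ext i j
    simpa [P, mul_apply, one_apply, dotProduct] using hv i j
  have hP' : Pᵀ * P = 1 := mul_eq_one_comm.mp hP
  have hT' : T = Pᵀ * diagonal lam * P := by rw [hT, sum_smul_vecMulVec_self_eq]
  have hSopt' : Sopt = Pᵀ * diagonal (topPosPart K lam) * P := by
    rw [hSopt, ← sum_smul_vecMulVec_self_eq, sum_filter]
    refine sum_congr rfl fun i _ => ?_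
    unfold topPosPart
    split_ifs <;> simp
  refine ⟨?_, ?_, fun S hS hSK => ?_⟩
  · rw [hSopt', ← conjTranspose_eq_transpose_of_trivial]
    exact (posSemidef_diagonal_iff.mpr (topPosPart_nonneg K lam)).conjTranspose_mul_mul_same P
  · rw [hSopt']
    exact (rank_mul_mul_le _ _ _).trans (rank_diagonal_topPosPart_le K lam)
  set M := P * S * Pᵀ
  have hM : M.PosSemidef := by
    simpa [M, conjTranspose_eq_transpose_of_trivial] using hS.mul_mul_conjTranspose_same P
  have hSM : S = Pᵀ * M * P := by
    rw [← Matrix.mul_assoc, ← Matrix.mul_assoc, hP', Matrix.one_mul, Matrix.mul_assoc, hP',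
      Matrix.mul_one]
  calc ((Sopt - T)ᵀ * (Sopt - T)).trace = ∑ i, (topPosPart K lam i - lam i) ^ 2 := by
        rw [hSopt', hT', trace_transpose_mul_self_conj_sub_conj _ _ hP, diagonal_sub,
          trace_transpose_mul_self_diagonal]
    _ ≤ ((M - diagonal lam)ᵀ * (M - diagonal lam)).trace :=
        hM.sum_sq_topPosPart_sub_le ((rank_mul_mul_le _ _ _).trans hSK) fun i j => hlam i j
    _ = ((S - T)ᵀ * (S - T)).trace := by
        rw [hSM, hT', trace_transpose_mul_self_conj_sub_conj _ _ hP]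
end
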